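/- arXiv:1901.03839 — 3 statements merged into one kernel-verified Lean document; each statement's English description precedes it below -/
import Mathlib

section
/- For the linear ODE V′ = (D+J)V, the one-step scheme defined by Y0 = V^{n−1} + Δt(D+J)V^{n−1}, Ŷ0 = Y0 + (Δt/2)J(Y0 − V^{n−1}), and (I − (Δt/2)D)Y1 = Ŷ0 − (Δt/2)D V^{n−1}, V^n = Y1 (the IETR scheme), is second-order consistent: if V^{n−1} = V(t_{n−1}) then V(t_n) − V^n = O(Δt³). -/
/-!
Write `A = D + J`, `B = 1 - (Δt/2)•D`, and `S` for the operator with `B V^n = S V^{n-1}`.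
With `T₂ = 1 + Δt A` and `T₃ = T₂ + (Δt²/2) A²` the Taylor polynomials of `exp (Δt A)`, one has
`S = T₃ - (Δt/2) D T₂`, so `B exp (Δt A) - S = (exp (Δt A) - T₃) - (Δt/2) D (exp (Δt A) - T₂)`
is `O(Δt³)`; and `B⁻¹` stays bounded as `Δt → 0`.
-/

open Matrix Filter Asymptotics Topology NormedSpace Ring

/-- The right-hand side `Ŷ0 - (Δt/2) D V^{n-1}` of the implicit stage, as an operator
applied to `V^{n-1}`. -/
noncomputable def ietrRhs {R : Type*} [Ring R] [Algebra ℝ R] (Δt : ℝ) (D J : R) : R :=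
  1 + Δt • (D + J) + (Δt ^ 2 / 2) • (J * (D + J)) - (Δt / 2) • D

theorem one_sub_smul_mul_sub_ietrRhs {R : Type*} [Ring R] [Algebra ℝ R] (Δt : ℝ) (D J E : R) :
    (1 - (Δt / 2) • D) * E - ietrRhs Δt D J =
      (E - ∑ i ∈ Finset.range 3, (i.factorial⁻¹ : ℝ) • (Δt • (D + J)) ^ i) -
        (Δt / 2) • (D * (E - ∑ i ∈ Finset.range 2,
          (i.factorial⁻¹ : ℝ) • (Δt • (D + J)) ^ i)) := by
  simp only [ietrRhs, Finset.sum_range_succ, Finset.sum_range_zero, sub_mul, one_mul,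
    Algebra.smul_mul_assoc, smul_add, sq, mul_add, Nat.factorial, Nat.cast_one, inv_one,
    pow_zero, one_smul, zero_add, Nat.succ_eq_add_one, mul_one, pow_one, smul_smul,
    Nat.reduceAdd, Nat.cast_ofNat, Algebra.mul_smul_comm, add_mul, mul_sub, smul_sub]
  module

section

variable {𝔸 : Type*} [NormedRing 𝔸] [NormedAlgebra ℝ 𝔸] [CompleteSpace 𝔸]

theorem exp_smul_sub_sum_range_isBigO (A : 𝔸) (m : ℕ) :
    (fun h : ℝ => exp (h • A) - ∑ i ∈ Finset.range m, (i.factorial⁻¹ : ℝ) • (h • A) ^ i)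
      =O[𝓝 0] (· ^ m) := by
  have htaylor := (hasFPowerSeriesAt_exp_zero_of_radius_pos
    (expSeries_radius_pos ℝ 𝔸)).isBigO_sub_partialSum_pow m
  have hA : Tendsto (fun h : ℝ => h • A) (𝓝 0) (𝓝 0) :=
    (by fun_prop : Continuous fun h : ℝ => h • A).tendsto' 0 0 (zero_smul ℝ A)
  have hremainder := htaylor.comp_tendsto hA
  simp only [zero_add, Function.comp_def, FormalMultilinearSeries.partialSum,
    expSeries_apply_eq] at hremainder
  refine hremainder.trans (IsBigO.of_bound (‖A‖ ^ m) (Eventually.of_forall fun h => ?_))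
  simp [norm_smul, mul_pow, mul_comm]

theorem exp_sub_inverse_mul_ietrRhs_isBigO (D J : 𝔸) :
    (fun Δt : ℝ => exp (Δt • (D + J)) - (1 - (Δt / 2) • D)⁻¹ʳ * ietrRhs Δt D J)
      =O[𝓝 0] (· ^ 3) := by
  set B : ℝ → 𝔸 := fun Δt => 1 - (Δt / 2) • D
  have hB : Tendsto B (𝓝 0) (𝓝 1) := (by fun_prop : Continuous B).tendsto' 0 1 (by simp [B])
  have hunit : ∀ᶠ Δt in 𝓝 0, IsUnit (B Δt) := hB.eventually (Units.nhds 1)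
  have hinv : (fun Δt => (B Δt)⁻¹ʳ) =O[𝓝 0] (fun _ => (1 : ℝ)) :=
    ((NormedRing.inverse_continuousAt 1).tendsto.comp hB).isBigO_one ℝ
  have hdefect : (fun Δt => B Δt * exp (Δt • (D + J)) - ietrRhs Δt D J) =O[𝓝 0] (· ^ 3) := by
    simp only [B, one_sub_smul_mul_sub_ietrRhs]
    refine (exp_smul_sub_sum_range_isBigO (D + J) 3).sub ?_
    have hsecond := (isBigO_refl (fun Δt : ℝ => Δt / 2) (𝓝 0)).smul
      ((exp_smul_sub_sum_range_isBigO (D + J) 2).const_mul_left D)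
    refine hsecond.trans (IsBigO.of_bound 2⁻¹ (Eventually.of_forall fun Δt => le_of_eq ?_))
    simp only [smul_eq_mul, norm_mul, norm_pow, norm_div, Real.norm_ofNat]
    ring
  refine (hinv.mul hdefect).congr' ?_ (Eventually.of_forall fun _ => one_mul _)
  filter_upwards [hunit] with Δt hu
  rw [mul_sub, Ring.inverse_mul_cancel_left _ _ hu]

end

theorem ietr_update_eq_mulVec {m : Type*} [Fintype m] [DecidableEq m] (Δt : ℝ)
    (D J : Matrix m m ℝ) (W : m → ℝ) :
    (W + Δt • (D + J) *ᵥ W) + (Δt / 2) • J *ᵥ ((W + Δt • (D + J) *ᵥ W) - W) -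
        (Δt / 2) • D *ᵥ W = ietrRhs Δt D J *ᵥ W := by
  simp only [ietrRhs, sub_mulVec, add_mulVec, one_mulVec, smul_mulVec, mulVec_smul,
    ← mulVec_mulVec, add_sub_cancel_left]
  module

/-- Second-order consistency of the IETR (implicit-explicit trapezoidal rule) scheme for the
linear ODE `V′ = (D+J)V`: with `Y0 = W + Δt(D+J)W`, `Ŷ0 = Y0 + (Δt/2)J(Y0 − W)` and
`(I − (Δt/2)D)Y1 = Ŷ0 − (Δt/2)DW`, `V^n = Y1`, one step from the exact value `W = V(t_{n−1})`
satisfies `V(t_n) − V^n = O(Δt³)`. -/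
theorem ietr_second_order_consistent {n : ℕ} (D J : Matrix (Fin n) (Fin n) ℝ)
    (W : Fin n → ℝ) :
    ∃ C δ : ℝ, 0 < δ ∧ ∀ Δt : ℝ, 0 < Δt → Δt < δ →
      ‖(NormedSpace.exp (Δt • (D + J))).mulVec W -
          (1 - (Δt / 2) • D)⁻¹.mulVec
            ((W + Δt • (D + J).mulVec W) +
              (Δt / 2) • J.mulVec ((W + Δt • (D + J).mulVec W) - W) -
              (Δt / 2) • D.mulVec W)‖ ≤ C * Δt ^ 3 := by
  -- the operator norm induced by the sup norm of `Fin n → ℝ`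
  let _ : NormedRing (Matrix (Fin n) (Fin n) ℝ) := Matrix.linftyOpNormedRing
  let _ : NormedAlgebra ℝ (Matrix (Fin n) (Fin n) ℝ) := Matrix.linftyOpNormedAlgebra
  obtain ⟨C, hC⟩ := (exp_sub_inverse_mul_ietrRhs_isBigO D J).bound
  obtain ⟨δ, hδ, hball⟩ := Metric.eventually_nhds_iff.1 hC
  refine ⟨C * ‖W‖, δ, hδ, fun Δt hpos hlt => ?_⟩
  rw [ietr_update_eq_mulVec, nonsing_inv_eq_ringInverse, mulVec_mulVec, ← sub_mulVec]
  calc _ ≤ ‖_‖ * ‖W‖ := linfty_opNorm_mulVec _ _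
    _ ≤ C * ‖Δt ^ 3‖ * ‖W‖ := by
      gcongr
      exact hball (by simpa [abs_of_pos hpos] using hlt)
    _ = C * ‖W‖ * Δt ^ 3 := by rw [norm_pow, Real.norm_of_nonneg hpos.le]; ring
end

section
/- For the linear ODE V′ = (A1 + A2 + A_M + J)V, the MCS scheme (with parameter θ > 0): Y0 = V^{n−1} + Δt(A1+A2+A_M+J)V^{n−1}; Y_j = Y_{j−1} + θΔt A_j(Y_j − V^{n−1}) for j = 1,2; Ŷ0 = Y0 + θΔt(A_M+J)(Y2 − V^{n−1}); Ỹ0 = Ŷ0 + (1/2 − θ)Δt(A1+A2+A_M+J)(Y2 − V^{n−1}); Ỹ_j = Ỹ_{j−1} + θΔt A_j(Ỹ_j − V^{n−1}) for j = 1,2; V^n = Ỹ2, is second-order consistent for every θ: if V^{n−1} = V(t_{n−1}) then V(t_n) − V^n = O(Δt³). -/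
/-!
One step of the scheme multiplies `V^{n-1}` by
`S(h) = 1 + P(h) (h A + h² c P(h) A)`, where `P(h) = (1 - θhA2)⁻¹ (1 - θhA1)⁻¹`,
`c = θ(A_M + J) + (1/2 - θ)A` and `h = Δt`. Expanding the resolvents,
`P(h) = 1 + hθ(A1 + A2) + O(h²)`, and since `θ(A1 + A2) + c = A/2` this gives
`S(h) = 1 + hA + h²A²/2 + O(h³)`, the second-order Taylor polynomial of `exp(hA)`.
-/

open Matrix Filter Topology Asymptotics NormedSpace

noncomputable def mcsAmplification {𝔸 : Type*} [Ring 𝔸] [Module ℝ 𝔸] (a1 a2 am j : 𝔸) (θ h : ℝ) :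
    𝔸 :=
  let a := a1 + a2 + am + j
  let p := Ring.inverse (1 - (θ * h) • a2) * Ring.inverse (1 - (θ * h) • a1)
  1 + p * (h • a + (h * h) • ((θ • (am + j) + (1 / 2 - θ) • a) * p * a))

section NormedAlgebra

variable {𝔸 : Type*} [NormedRing 𝔸] [NormedAlgebra ℝ 𝔸]

theorem tendsto_smul_const_nhds_zero (a : 𝔸) : Tendsto (fun h : ℝ => h • a) (𝓝 0) (𝓝 0) :=
  (continuous_id.smul continuous_const).tendsto' 0 0 (zero_smul ℝ a)

theorem isBigO_norm_smul_const_pow (a : 𝔸) (n : ℕ) :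
    (fun h : ℝ => ‖h • a‖ ^ n) =O[𝓝 0] fun h => h ^ n :=
  IsBigO.of_bound (‖a‖ ^ n) (Eventually.of_forall fun h => by simp [norm_smul, mul_pow, mul_comm])

theorem isBigO_smul_const_of_isBigO {k g : ℝ → ℝ} (hk : k =O[𝓝 0] g) (v : 𝔸) :
    (fun h => k h • v) =O[𝓝 0] g := by
  simpa using hk.smul (isBigO_const_const v (one_ne_zero' ℝ) (𝓝 0))

theorem isBigO_one_add_smul_const_one (x : 𝔸) :
    (fun h : ℝ => 1 + h • x) =O[𝓝 0] fun _ => (1 : ℝ) := by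
  refine Tendsto.isBigO_one ℝ (c := (1 : 𝔸)) ?_
  simpa using tendsto_const_nhds.add (tendsto_smul_const_nhds_zero x)

theorem isBigO_one_of_isBigO_sub_one_add_smul {f : ℝ → 𝔸} {x : 𝔸}
    (hf : (fun h => f h - (1 + h • x)) =O[𝓝 0] fun h => h ^ 2) :
    f =O[𝓝 0] fun _ => (1 : ℝ) := by
  have hsq : (fun h : ℝ => h ^ 2) =O[𝓝 0] fun _ => (1 : ℝ) := by
    simpa using (isLittleO_pow_pow (𝕜 := ℝ) two_pos).isBigO
  exact ((hf.trans hsq).add (isBigO_one_add_smul_const_one x)).congr_left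
    fun h => sub_add_cancel _ _

theorem isBigO_mul_sub_one_add_smul {f g : ℝ → 𝔸} {x y : 𝔸}
    (hf : (fun h => f h - (1 + h • x)) =O[𝓝 0] fun h => h ^ 2)
    (hg : (fun h => g h - (1 + h • y)) =O[𝓝 0] fun h => h ^ 2) :
    (fun h => f h * g h - (1 + h • (x + y))) =O[𝓝 0] fun h => h ^ 2 := by
  have h1 : (fun h => (f h - (1 + h • x)) * g h) =O[𝓝 0] fun h => h ^ 2 := by
    simpa using hf.mul (isBigO_one_of_isBigO_sub_one_add_smul hg)
  have h2 : (fun h => (1 + h • x) * (g h - (1 + h • y))) =O[𝓝 0] fun h => h ^ 2 := by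
    simpa using (isBigO_one_add_smul_const_one x).mul hg
  have h3 := isBigO_smul_const_of_isBigO (isBigO_refl (fun h : ℝ => h ^ 2) _) (x * y)
  refine ((h1.add h2).add h3).congr_left fun h => ?_
  simp only [sub_mul, mul_sub, add_mul, mul_add, one_mul, mul_one, smul_mul_smul, smul_add, pow_two]
  abel

/-- The condition `b + c = a / 2` is what makes the `h²` coefficient match that of `exp (h a)`. -/
theorem isBigO_one_add_mul_sub_taylor {p : ℝ → 𝔸} {a b c : 𝔸} (hbc : b + c = (1 / 2 : ℝ) • a)
    (hp : (fun h => p h - (1 + h • b)) =O[𝓝 0] fun h => h ^ 2) :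
    (fun h => 1 + p h * (h • a + (h * h) • (c * p h * a)) - (1 + h • a + (h ^ 2 / 2) • a ^ 2))
      =O[𝓝 0] fun h => h ^ 3 := by
  have hsq : (fun h : ℝ => h ^ 2) =O[𝓝 0] fun h => h := by
    simpa using (isLittleO_pow_pow (𝕜 := ℝ) one_lt_two).isBigO
  have hp1 : (fun h => p h - 1) =O[𝓝 0] fun h => h :=
    ((hp.trans hsq).add (isBigO_smul_const_of_isBigO (isBigO_refl _ _) b)).congr_left
      fun h => by abel
  have hpcp : (fun h => p h * c * p h - c) =O[𝓝 0] fun h => h := by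
    have h1 : (fun h => (p h - 1) * c * p h) =O[𝓝 0] fun h => h := by
      simpa using (hp1.mul (isBigO_const_const c (one_ne_zero' ℝ) _)).mul
        (isBigO_one_of_isBigO_sub_one_add_smul hp)
    have h2 : (fun h => c * (p h - 1)) =O[𝓝 0] fun h => h := by
      simpa using (isBigO_const_const c (one_ne_zero' ℝ) _).mul hp1
    refine (h1.add h2).congr_left fun h => ?_
    simp only [sub_mul, mul_sub, one_mul, mul_one]
    abel
  have e1 : (fun h : ℝ => h • ((p h - (1 + h • b)) * a)) =O[𝓝 0] fun h => h ^ 3 :=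
    (isBigO_refl (fun h : ℝ => h) _).smul (hp.mul (isBigO_const_const a (one_ne_zero' ℝ) _))
      |>.congr_right fun h => by rw [smul_eq_mul]; ring
  have e2 : (fun h : ℝ => h ^ 2 • ((p h * c * p h - c) * a)) =O[𝓝 0] fun h => h ^ 3 :=
    (isBigO_refl (fun h : ℝ => h ^ 2) _).smul (hpcp.mul (isBigO_const_const a (one_ne_zero' ℝ) _))
      |>.congr_right fun h => by rw [smul_eq_mul]; ring
  obtain rfl : c = (1 / 2 : ℝ) • a - b := by rw [← hbc]; abel
  refine (e1.add e2).congr_left fun h => ?_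
  simp only [sub_mul, mul_sub, add_mul, mul_add, smul_mul_assoc, mul_smul_comm, smul_sub, smul_add,
    smul_smul, one_mul, mul_assoc, pow_two]
  module

variable [CompleteSpace 𝔸]

theorem isBigO_exp_smul_sub_taylor (a : 𝔸) :
    (fun h : ℝ => exp (h • a) - (1 + h • a + (h ^ 2 / 2) • a ^ 2)) =O[𝓝 0] fun h => h ^ 3 := by
  have hexp : HasFPowerSeriesAt (exp : 𝔸 → 𝔸) (expSeries ℝ 𝔸) 0 :=
    hasFPowerSeriesAt_exp_zero_of_radius_pos (by simp [expSeries_radius_eq_top])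
  refine (((hexp.isBigO_sub_partialSum_pow 3).comp_tendsto (tendsto_smul_const_nhds_zero a)).trans
    (isBigO_norm_smul_const_pow a 3)).congr_left fun h => ?_
  simp [FormalMultilinearSeries.partialSum, Finset.sum_range_succ, expSeries_apply_eq, smul_pow,
    smul_smul, div_eq_inv_mul]

theorem isBigO_inverse_one_sub_smul_sub (a : 𝔸) :
    (fun h : ℝ => Ring.inverse (1 - h • a) - (1 + h • a)) =O[𝓝 0] fun h => h ^ 2 := by
  have hsmul := tendsto_smul_const_nhds_zero a
  have hR : (fun h : ℝ => Ring.inverse (1 - h • a)) =O[𝓝 0] fun _ => (1 : ℝ) :=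
    NormedRing.inverse_one_sub_norm.comp_tendsto hsmul
  refine ((isBigO_refl (fun h : ℝ => h ^ 2) _).smul
    ((isBigO_const_const (a ^ 2) one_ne_zero _).mul hR)).congr' ?_ (by simp)
  filter_upwards [hsmul.eventually (NormedRing.inverse_one_sub_nth_order 2)] with h hh
  conv_rhs => rw [hh]
  simp [Finset.sum_range_succ, smul_pow]

theorem eventually_isUnit_one_sub_smul (a : 𝔸) : ∀ᶠ h : ℝ in 𝓝 0, IsUnit (1 - h • a) := by
  have : Tendsto (fun h : ℝ => 1 - h • a) (𝓝 0) (𝓝 1) := by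
    simpa using tendsto_const_nhds.sub (tendsto_smul_const_nhds_zero a)
  exact this.eventually (Units.isOpen.mem_nhds isUnit_one)

theorem isBigO_exp_smul_sub_mcsAmplification (a1 a2 am j : 𝔸) (θ : ℝ) :
    (fun h => exp (h • (a1 + a2 + am + j)) - mcsAmplification a1 a2 am j θ h)
      =O[𝓝 0] fun h => h ^ 3 := by
  have hres (x : 𝔸) : (fun h : ℝ => Ring.inverse (1 - (θ * h) • x) - (1 + h • (θ • x)))
      =O[𝓝 0] fun h => h ^ 2 := by
    simpa only [mul_comm θ, mul_smul] using isBigO_inverse_one_sub_smul_sub (θ • x)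
  have hamp := isBigO_one_add_mul_sub_taylor
    (a := a1 + a2 + am + j) (c := θ • (am + j) + (1 / 2 - θ) • (a1 + a2 + am + j)) (by module)
    (isBigO_mul_sub_one_add_smul (hres a2) (hres a1))
  refine ((isBigO_exp_smul_sub_taylor (a1 + a2 + am + j)).sub hamp).congr_left fun h => ?_
  simp only [mcsAmplification]
  abel

end NormedAlgebra

section Matrix

variable {ι : Type*} [Fintype ι] [DecidableEq ι]

noncomputable def mcsStep (A1 A2 AM J : Matrix ι ι ℝ) (θ Δt : ℝ) (W : ι → ℝ) : ι → ℝ :=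
  let A := A1 + A2 + AM + J
  let Y0 := W + Δt • A.mulVec W
  let Y1 := (1 - (θ * Δt) • A1)⁻¹.mulVec (Y0 - (θ * Δt) • A1.mulVec W)
  let Y2 := (1 - (θ * Δt) • A2)⁻¹.mulVec (Y1 - (θ * Δt) • A2.mulVec W)
  let Yhat0 := Y0 + (θ * Δt) • (AM + J).mulVec (Y2 - W)
  let Ytilde0 := Yhat0 + ((1 / 2 - θ) * Δt) • A.mulVec (Y2 - W)
  let Ytilde1 := (1 - (θ * Δt) • A1)⁻¹.mulVec (Ytilde0 - (θ * Δt) • A1.mulVec W)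
  (1 - (θ * Δt) • A2)⁻¹.mulVec (Ytilde1 - (θ * Δt) • A2.mulVec W)

theorem inv_one_sub_smul_mulVec_sub {B : Matrix ι ι ℝ} {c : ℝ} (hB : IsUnit (1 - c • B))
    (x w : ι → ℝ) : (1 - c • B)⁻¹ *ᵥ (x - c • B *ᵥ w) = w + (1 - c • B)⁻¹ *ᵥ (x - w) := by
  have hdet := (isUnit_iff_isUnit_det _).mp hB
  rw [show x - c • B *ᵥ w = (x - w) + (1 - c • B) *ᵥ w by
    rw [sub_mulVec, one_mulVec, smul_mulVec]; abel, mulVec_add, mulVec_mulVec,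
    nonsing_inv_mul _ hdet, one_mulVec, add_comm]

theorem mcsStep_eq_mcsAmplification_mulVec {A1 A2 AM J : Matrix ι ι ℝ} {θ Δt : ℝ}
    (h1 : IsUnit (1 - (θ * Δt) • A1)) (h2 : IsUnit (1 - (θ * Δt) • A2)) (W : ι → ℝ) :
    mcsStep A1 A2 AM J θ Δt W = mcsAmplification A1 A2 AM J θ Δt *ᵥ W := by
  simp only [mcsStep, inv_one_sub_smul_mulVec_sub h1, inv_one_sub_smul_mulVec_sub h2,
    mcsAmplification, ← nonsing_inv_eq_ringInverse]
  simp only [add_mulVec, mulVec_add, mulVec_sub, one_mulVec, smul_mulVec, mulVec_smul,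
    ← mulVec_mulVec, smul_smul, add_sub_cancel_left]
  module

attribute [local instance] Matrix.linftyOpNormedRing Matrix.linftyOpNormedAlgebra

theorem isBigO_exp_smul_mulVec_sub_mcsStep (A1 A2 AM J : Matrix ι ι ℝ) (θ : ℝ) (W : ι → ℝ) :
    (fun Δt => exp (Δt • (A1 + A2 + AM + J)) *ᵥ W - mcsStep A1 A2 AM J θ Δt W)
      =O[𝓝 0] fun Δt => Δt ^ 3 := by
  have hunit (B : Matrix ι ι ℝ) : ∀ᶠ Δt : ℝ in 𝓝 0, IsUnit (1 - (θ * Δt) • B) := by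
    simpa only [mul_comm θ, mul_smul] using eventually_isUnit_one_sub_smul (θ • B)
  have hmulVec : (fun Δt =>
      (exp (Δt • (A1 + A2 + AM + J)) - mcsAmplification A1 A2 AM J θ Δt) *ᵥ W)
        =O[𝓝 0] fun Δt => Δt ^ 3 :=
    (IsBigO.of_bound ‖W‖ (Eventually.of_forall fun Δt => by
      rw [mul_comm]; exact linfty_opNorm_mulVec _ _)).trans
      (isBigO_exp_smul_sub_mcsAmplification A1 A2 AM J θ)
  refine hmulVec.congr' ?_ EventuallyEq.rfl
  filter_upwards [hunit A1, hunit A2] with Δt h1 h2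
  rw [mcsStep_eq_mcsAmplification_mulVec h1 h2, sub_mulVec]

end Matrix

theorem exists_bound_of_isBigO_pow {E : Type*} [SeminormedAddCommGroup E] {f : ℝ → E} {n : ℕ}
    (hf : f =O[𝓝 0] fun x => x ^ n) :
    ∃ C δ : ℝ, 0 < δ ∧ ∀ x, 0 < x → x < δ → ‖f x‖ ≤ C * x ^ n := by
  obtain ⟨C, hC⟩ := hf.bound
  obtain ⟨δ, hδ, hball⟩ := Metric.eventually_nhds_iff.mp hC
  refine ⟨C, δ, hδ, fun x hx hxδ => ?_⟩
  have := hball (show dist x 0 < δ by simpa [abs_of_pos hx] using hxδ)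
  rwa [norm_pow, Real.norm_of_nonneg hx.le] at this

theorem mcs_second_order_consistent_general {n : ℕ} (A1 A2 AM J : Matrix (Fin n) (Fin n) ℝ)
    (θ : ℝ) (W : Fin n → ℝ) :
    ∃ C δ : ℝ, 0 < δ ∧ ∀ Δt : ℝ, 0 < Δt → Δt < δ →
      let A := A1 + A2 + AM + J
      let Y0 := W + Δt • A.mulVec W
      let Y1 := (1 - (θ * Δt) • A1)⁻¹.mulVec (Y0 - (θ * Δt) • A1.mulVec W)
      let Y2 := (1 - (θ * Δt) • A2)⁻¹.mulVec (Y1 - (θ * Δt) • A2.mulVec W)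
      let Yhat0 := Y0 + (θ * Δt) • (AM + J).mulVec (Y2 - W)
      let Ytilde0 := Yhat0 + ((1 / 2 - θ) * Δt) • A.mulVec (Y2 - W)
      let Ytilde1 := (1 - (θ * Δt) • A1)⁻¹.mulVec (Ytilde0 - (θ * Δt) • A1.mulVec W)
      let Ytilde2 := (1 - (θ * Δt) • A2)⁻¹.mulVec (Ytilde1 - (θ * Δt) • A2.mulVec W)
      ‖(NormedSpace.exp (Δt • A)).mulVec W - Ytilde2‖ ≤ C * Δt ^ 3 :=
  exists_bound_of_isBigO_pow (isBigO_exp_smul_mulVec_sub_mcsStep A1 A2 AM J θ W)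

/-- Second-order consistency of the MCS (modified Craig–Sneyd) scheme, adapted to PIDEs, for
the linear ODE `V′ = (A1 + A2 + A_M + J)V`: for every parameter `θ > 0`, one step of the
scheme started from the exact value `W = V(t_{n−1})` satisfies `V(t_n) − V^n = O(Δt³)`. -/
theorem mcs_second_order_consistent {n : ℕ} (A1 A2 AM J : Matrix (Fin n) (Fin n) ℝ)
    (θ : ℝ) (hθ : 0 < θ) (W : Fin n → ℝ) :
    ∃ C δ : ℝ, 0 < δ ∧ ∀ Δt : ℝ, 0 < Δt → Δt < δ →
      let A := A1 + A2 + AM + J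
      let Y0 := W + Δt • A.mulVec W
      let Y1 := (1 - (θ * Δt) • A1)⁻¹.mulVec (Y0 - (θ * Δt) • A1.mulVec W)
      let Y2 := (1 - (θ * Δt) • A2)⁻¹.mulVec (Y1 - (θ * Δt) • A2.mulVec W)
      let Yhat0 := Y0 + (θ * Δt) • (AM + J).mulVec (Y2 - W)
      let Ytilde0 := Yhat0 + ((1 / 2 - θ) * Δt) • A.mulVec (Y2 - W)
      let Ytilde1 := (1 - (θ * Δt) • A1)⁻¹.mulVec (Ytilde0 - (θ * Δt) • A1.mulVec W)
      let Ytilde2 := (1 - (θ * Δt) • A2)⁻¹.mulVec (Ytilde1 - (θ * Δt) • A2.mulVec W)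
      ‖(NormedSpace.exp (Δt • A)).mulVec W - Ytilde2‖ ≤ C * Δt ^ 3 :=
  mcs_second_order_consistent_general A1 A2 AM J θ W
end

section
/- Let A^{(J)} be the matrix with entries (A^{(J)})_{(k,l),(i,j)} = λ f̄((i−k)Δx1, (j−l)Δx2) Δx1 Δx2 for the bivariate normal density f̄. Then the maximum (row-sum) norm of A^{(J)} satisfies ‖A^{(J)}‖_∞ ≤ λ · Σ_{i,j∈ℤ} f̄(iΔx1, jΔx2)Δx1Δx2, and this bound is finite and converges to λ as Δx1, Δx2 → 0; in particular ‖A^{(J)}‖_∞ ≤ λ(1 + C(Δx1 + Δx2)) for a constant C depending only on f̄. -/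
/-!
The row sums of the matrix are partial sums of the nonnegative lattice series
`Σ f̄(iΔ1, jΔ2) Δ1 Δ2`, so everything reduces to showing that this Riemann sum is within
`C (Δ1 + Δ2)` of `∫∫ f̄ = 1`. On a cell of width `Δ` the rectangle rule errs by at most
`Δ ∫_cell |f'|`, so the lattice sum of a function on `ℝ` is within `Δ ‖f'‖₁` of its integral.
The bivariate density factors as the `N(γ1, δ1²)` density of `x` times the conditional
`N(γ2 + ρ δ2 (x - γ1) / δ1, (1 - ρ²) δ2²)` density of `y`; summing first over `j` and then
over `i`, the one-dimensional bound applies to each factor, with the total variations of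
the two Gaussian densities as constants.
-/

open Real Filter MeasureTheory Set ProbabilityTheory
open scoped NNReal Topology

section Series

variable {ι : Type*} {a b e : ι → ℝ} {B E : ℝ}

lemma summable_and_abs_tsum_sub_le_of_abs_sub_le (hb : HasSum b B) (he : HasSum e E)
    (h : ∀ i, |a i - b i| ≤ e i) : Summable a ∧ |∑' i, a i - B| ≤ E := by
  have ha : Summable a := by
    simpa using (Summable.of_norm_bounded (f := a - b) he.summable h).add hb.summable
  refine ⟨ha, ?_⟩
  rw [← hb.tsum_eq, ← ha.tsum_sub hb.summable]
  exact tsum_of_norm_bounded (f := fun i ↦ a i - b i) he h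

lemma summable_and_abs_tsum_prod_sub_le {κ : Type*} {u : ι × κ → ℝ} (hu : 0 ≤ u)
    (ha : HasSum a B) (he : HasSum e E) (hrow : ∀ i, Summable fun j ↦ u (i, j))
    (h : ∀ i, |∑' j, u (i, j) - a i| ≤ e i) : Summable u ∧ |∑' p, u p - B| ≤ E := by
  obtain ⟨hrows, hbound⟩ := summable_and_abs_tsum_sub_le_of_abs_sub_le ha he h
  have hu_sum : Summable u := (summable_prod_of_nonneg hu).2 ⟨hrow, hrows⟩
  exact ⟨hu_sum, hu_sum.tsum_prod' hrow ▸ hbound⟩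

end Series

section RectangleRule

variable {f f' : ℝ → ℝ} {a b Δ : ℝ}

lemma abs_sub_le_setIntegral_Ico_abs (hf : ∀ x ∈ Icc a b, HasDerivAt f (f' x) x)
    (hf' : IntegrableOn f' (Icc a b)) {x : ℝ} (hx : x ∈ Ico a b) :
    |f x - f a| ≤ ∫ t in Ico a b, |f' t| := by
  have hsub : uIcc a x ⊆ Icc a b := by
    rw [uIcc_of_le hx.1]; exact Icc_subset_Icc_right hx.2.le
  rw [← intervalIntegral.integral_eq_sub_of_hasDerivAt (fun t ht ↦ hf t (hsub ht))
    (hf'.mono_set hsub).intervalIntegrable]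
  calc |∫ t in a..x, f' t| ≤ ∫ t in a..x, |f' t| :=
        intervalIntegral.abs_integral_le_integral_abs hx.1
    _ = ∫ t in Ioc a x, |f' t| := intervalIntegral.integral_of_le hx.1
    _ ≤ ∫ t in Ico a b, |f' t| :=
        setIntegral_mono_set (hf'.mono_set Ico_subset_Icc_self).abs
          (Eventually.of_forall fun _ ↦ abs_nonneg _)
          (Eventually.of_forall fun t ht ↦ ⟨ht.1.le, ht.2.trans_lt hx.2⟩)

lemma abs_mul_sub_setIntegral_Ico_le (hab : a ≤ b) (hf : ∀ x ∈ Icc a b, HasDerivAt f (f' x) x)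
    (hfi : IntegrableOn f (Ico a b)) (hf' : IntegrableOn f' (Icc a b)) :
    |f a * (b - a) - ∫ x in Ico a b, f x| ≤ (b - a) * ∫ t in Ico a b, |f' t| := by
  have hvol : volume.real (Ico a b) = b - a := by simp [hab]
  have hconst : f a * (b - a) = ∫ _ in Ico a b, f a := by
    rw [setIntegral_const, hvol, smul_eq_mul, mul_comm]
  rw [hconst, ← integral_sub (integrableOn_const (C := f a) (by simp)) hfi, ← Real.norm_eq_abs,
    mul_comm, ← hvol]
  refine norm_setIntegral_le_of_norm_le_const (by simp) fun x hx ↦ ?_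
  rw [Real.norm_eq_abs, abs_sub_comm]
  exact abs_sub_le_setIntegral_Ico_abs hf hf' hx

lemma hasSum_setIntegral_Ico_int_mul (hΔ : 0 < Δ) (hf : Integrable f) :
    HasSum (fun i : ℤ ↦ ∫ x in Ico (i * Δ) ((i + 1) * Δ), f x) (∫ x, f x) := by
  have h := hasSum_integral_iUnion (fun i ↦ measurableSet_Ico) (pairwise_disjoint_Ico_zsmul Δ)
    (by rw [iUnion_Ico_zsmul hΔ]; exact hf.integrableOn)
  rw [iUnion_Ico_zsmul hΔ, setIntegral_univ] at h
  simpa only [zsmul_eq_mul, Int.cast_add, Int.cast_one] using h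

theorem summable_and_abs_tsum_mul_sub_integral_le (hΔ : 0 < Δ)
    (hf : ∀ x, HasDerivAt f (f' x) x) (hfi : Integrable f) (hf' : Integrable f') :
    Summable (fun i : ℤ ↦ f (i * Δ) * Δ) ∧
      |∑' i : ℤ, f (i * Δ) * Δ - ∫ x, f x| ≤ Δ * ∫ x, |f' x| := by
  have hcell (i : ℤ) := abs_mul_sub_setIntegral_Ico_le
    (by gcongr; linarith : (i : ℝ) * Δ ≤ (i + 1) * Δ) (fun x _ ↦ hf x) hfi.integrableOn
    hf'.integrableOn
  have hwidth (i : ℤ) : ((i : ℝ) + 1) * Δ - i * Δ = Δ := by ring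
  simp only [hwidth] at hcell
  exact summable_and_abs_tsum_sub_le_of_abs_sub_le (hasSum_setIntegral_Ico_int_mul hΔ hfi)
    ((hasSum_setIntegral_Ico_int_mul hΔ hf'.abs).mul_left Δ) hcell

end RectangleRule

section Gaussian

lemma hasDerivAt_gaussianPDFReal (μ : ℝ) (v : ℝ≥0) (x : ℝ) :
    HasDerivAt (gaussianPDFReal μ v) (-((x - μ) / v) * gaussianPDFReal μ v x) x := by
  have hexp : HasDerivAt (fun x ↦ -(x - μ) ^ 2 / (2 * v)) (-(2 * (x - μ)) / (2 * v)) x := by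
    simpa using (((hasDerivAt_id x).sub_const μ).pow 2).neg.div_const (2 * (v : ℝ))
  rw [gaussianPDFReal_def]
  exact (hexp.exp.const_mul _).congr_deriv (by ring)

lemma integrable_deriv_gaussianPDFReal (μ : ℝ) {v : ℝ≥0} (hv : v ≠ 0) :
    Integrable (fun x ↦ -((x - μ) / v) * gaussianPDFReal μ v x) := by
  have hb : 0 < (2 * (v : ℝ))⁻¹ := by positivity
  refine (((integrable_mul_exp_neg_mul_sq hb).comp_sub_right μ).const_mul
    (-((√(2 * π * v))⁻¹ / v))).congr (Eventually.of_forall fun x ↦ ?_)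
  simp only [gaussianPDFReal]
  ring_nf

noncomputable def gaussianTotalVariation (v : ℝ≥0) : ℝ := ∫ x, |x / v * gaussianPDFReal 0 v x|

lemma gaussianTotalVariation_nonneg (v : ℝ≥0) : 0 ≤ gaussianTotalVariation v :=
  integral_nonneg fun _ ↦ abs_nonneg _

lemma integral_abs_deriv_gaussianPDFReal (μ : ℝ) (v : ℝ≥0) :
    ∫ x, |-((x - μ) / v) * gaussianPDFReal μ v x| = gaussianTotalVariation v := by
  have h (x : ℝ) : |-((x - μ) / v) * gaussianPDFReal μ v x|
      = |(x - μ) / v * gaussianPDFReal 0 v (x - μ)| := by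
    rw [gaussianPDFReal_sub, zero_add, neg_mul, abs_neg]
  simp_rw [h]
  exact integral_sub_right_eq_self (fun x ↦ |x / v * gaussianPDFReal 0 v x|) μ

theorem summable_and_abs_tsum_gaussianPDFReal_sub_one_le (μ : ℝ) {v : ℝ≥0} (hv : v ≠ 0)
    {Δ : ℝ} (hΔ : 0 < Δ) :
    Summable (fun i : ℤ ↦ gaussianPDFReal μ v (i * Δ) * Δ) ∧
      |∑' i : ℤ, gaussianPDFReal μ v (i * Δ) * Δ - 1| ≤ Δ * gaussianTotalVariation v := by
  have h := summable_and_abs_tsum_mul_sub_integral_le hΔ (hasDerivAt_gaussianPDFReal μ v)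
    (integrable_gaussianPDFReal μ v) (integrable_deriv_gaussianPDFReal μ hv)
  rwa [integral_gaussianPDFReal_eq_one μ hv, integral_abs_deriv_gaussianPDFReal] at h

end Gaussian

noncomputable def bivariateNormalPDF (γ1 γ2 δ1 δ2 ρ x y : ℝ) : ℝ :=
  (2 * π * δ1 * δ2 * Real.sqrt (1 - ρ ^ 2))⁻¹ *
    Real.exp (-((((x - γ1) / δ1) ^ 2 + ((y - γ2) / δ2) ^ 2 -
      2 * ρ * ((x - γ1) / δ1) * ((y - γ2) / δ2)) / (2 * (1 - ρ ^ 2))))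

section Bivariate

variable {γ1 γ2 δ1 δ2 ρ : ℝ}

lemma bivariateNormalPDF_eq_mul (hδ1 : 0 < δ1) (hδ2 : 0 < δ2) (hρ : |ρ| < 1) (x y : ℝ) :
    bivariateNormalPDF γ1 γ2 δ1 δ2 ρ x y = gaussianPDFReal γ1 (δ1 ^ 2).toNNReal x *
      gaussianPDFReal (γ2 + ρ * δ2 * ((x - γ1) / δ1)) ((1 - ρ ^ 2) * δ2 ^ 2).toNNReal y := by
  have hρ2 : 0 < 1 - ρ ^ 2 := by nlinarith [abs_lt.mp hρ]
  rw [gaussianPDFReal, gaussianPDFReal, Real.coe_toNNReal _ (by positivity),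
    Real.coe_toNNReal _ (by positivity), mul_mul_mul_comm, ← Real.exp_add, ← mul_inv,
    ← Real.sqrt_mul (by positivity),
    show 2 * π * δ1 ^ 2 * (2 * π * ((1 - ρ ^ 2) * δ2 ^ 2)) = (2 * π * δ1 * δ2) ^ 2 * (1 - ρ ^ 2)
      by ring, Real.sqrt_mul (by positivity), Real.sqrt_sq (by positivity), bivariateNormalPDF]
  congr 2
  field_simp
  ring

lemma bivariateNormalPDF_nonneg (hδ1 : 0 < δ1) (hδ2 : 0 < δ2) (hρ : |ρ| < 1) (x y : ℝ) :
    0 ≤ bivariateNormalPDF γ1 γ2 δ1 δ2 ρ x y := by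
  rw [bivariateNormalPDF_eq_mul hδ1 hδ2 hρ]
  exact mul_nonneg (gaussianPDFReal_nonneg _ _ _) (gaussianPDFReal_nonneg _ _ _)

theorem bivariateNormalPDF_lattice_sum_sub_one_le (hδ1 : 0 < δ1) (hδ2 : 0 < δ2) (hρ : |ρ| < 1) :
    ∃ C, ∀ Δ1 Δ2 : ℝ, 0 < Δ1 → Δ1 ≤ 1 → 0 < Δ2 →
      Summable (fun ij : ℤ × ℤ ↦
        bivariateNormalPDF γ1 γ2 δ1 δ2 ρ (ij.1 * Δ1) (ij.2 * Δ2) * Δ1 * Δ2) ∧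
      |∑' ij : ℤ × ℤ, bivariateNormalPDF γ1 γ2 δ1 δ2 ρ (ij.1 * Δ1) (ij.2 * Δ2) * Δ1 * Δ2 - 1|
        ≤ C * (Δ1 + Δ2) := by
  have hρ2 : 0 < 1 - ρ ^ 2 := by nlinarith [abs_lt.mp hρ]
  set v1 := (δ1 ^ 2).toNNReal
  set v2 := ((1 - ρ ^ 2) * δ2 ^ 2).toNNReal
  have hv1 : v1 ≠ 0 := (Real.toNNReal_pos.mpr (by positivity)).ne'
  have hv2 : v2 ≠ 0 := (Real.toNNReal_pos.mpr (by positivity)).ne'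
  set W1 := gaussianTotalVariation v1
  set W2 := gaussianTotalVariation v2
  have hW1 : 0 ≤ W1 := gaussianTotalVariation_nonneg v1
  have hW2 : 0 ≤ W2 := gaussianTotalVariation_nonneg v2
  refine ⟨W1 + W2 * (1 + W1), fun Δ1 Δ2 hΔ1 hΔ1_le hΔ2 ↦ ?_⟩
  set a : ℤ → ℝ := fun i ↦ gaussianPDFReal γ1 v1 (i * Δ1) * Δ1
  set m : ℤ → ℝ := fun i ↦ γ2 + ρ * δ2 * ((i * Δ1 - γ1) / δ1)
  have hu (ij : ℤ × ℤ) : bivariateNormalPDF γ1 γ2 δ1 δ2 ρ (ij.1 * Δ1) (ij.2 * Δ2) * Δ1 * Δ2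
      = a ij.1 * (gaussianPDFReal (m ij.1) v2 (ij.2 * Δ2) * Δ2) := by
    rw [bivariateNormalPDF_eq_mul hδ1 hδ2 hρ]
    ring
  simp_rw [hu]
  obtain ⟨ha, haA⟩ := summable_and_abs_tsum_gaussianPDFReal_sub_one_le γ1 hv1 hΔ1
  have ha_nonneg (i : ℤ) : 0 ≤ a i := mul_nonneg (gaussianPDFReal_nonneg _ _ _) hΔ1.le
  have hrow (i : ℤ) := summable_and_abs_tsum_gaussianPDFReal_sub_one_le (m i) hv2 hΔ2
  obtain ⟨hsum, hS⟩ := summable_and_abs_tsum_prod_sub_le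
    (u := fun ij : ℤ × ℤ ↦ a ij.1 * (gaussianPDFReal (m ij.1) v2 (ij.2 * Δ2) * Δ2))
    (fun ij ↦ mul_nonneg (ha_nonneg _) (mul_nonneg (gaussianPDFReal_nonneg _ _ _) hΔ2.le))
    ha.hasSum (ha.hasSum.mul_left (Δ2 * W2)) (fun i ↦ (hrow i).1.mul_left (a i))
    (fun i ↦ by
      show |∑' j : ℤ, a i * (gaussianPDFReal (m i) v2 (j * Δ2) * Δ2) - a i| ≤ Δ2 * W2 * a i
      rw [tsum_mul_left, ← mul_sub_one, abs_mul, abs_of_nonneg (ha_nonneg i), mul_comm]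
      exact mul_le_mul_of_nonneg_right (hrow i).2 (ha_nonneg i))
  refine ⟨hsum, ?_⟩
  have hA : ∑' i, a i ≤ 1 + W1 := by
    linarith [(abs_le.mp haA).2, mul_le_mul_of_nonneg_right hΔ1_le hW1]
  calc _ ≤ |∑' ij : ℤ × ℤ, a ij.1 * (gaussianPDFReal (m ij.1) v2 (ij.2 * Δ2) * Δ2) - ∑' i, a i|
        + |∑' i, a i - 1| := abs_sub_le _ _ _
    _ ≤ Δ2 * W2 * (1 + W1) + Δ1 * W1 := by
        gcongr
        exact hS.trans (mul_le_mul_of_nonneg_left hA (by positivity))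
    _ ≤ (W1 + W2 * (1 + W1)) * (Δ1 + Δ2) := by
        nlinarith [mul_nonneg hW1 hΔ2.le,
          mul_nonneg (mul_nonneg hW2 (by positivity : 0 ≤ 1 + W1)) hΔ1.le]

end Bivariate

lemma sum_fin_prod_sub_le_tsum {u : ℤ × ℤ → ℝ} (hu : ∀ ij, 0 ≤ u ij) (hs : Summable u)
    {M1 M2 : ℕ} (p : Fin M1 × Fin M2) :
    ∑ q : Fin M1 × Fin M2, u ((q.1 : ℤ) - p.1, (q.2 : ℤ) - p.2) ≤ ∑' ij, u ij := by
  have hinj :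
      Function.Injective fun q : Fin M1 × Fin M2 ↦ ((q.1 : ℤ) - p.1, (q.2 : ℤ) - p.2) := by
    intro q q' h
    simp only [Prod.mk.injEq, sub_left_inj, Nat.cast_inj] at h
    exact Prod.ext (Fin.ext h.1) (Fin.ext h.2)
  rw [← tsum_fintype (L := .unconditional _)]
  exact tsum_comp_le_tsum_of_inj hs hu hinj

lemma tendsto_nhdsWithin_Ioi_prod_of_abs_sub_le {S : ℝ × ℝ → ℝ} {L C : ℝ}
    (h : ∀ d1 d2 : ℝ, 0 < d1 → d1 ≤ 1 → 0 < d2 → |S (d1, d2) - L| ≤ C * (d1 + d2)) :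
    Tendsto S (𝓝[Ioi 0 ×ˢ Ioi 0] (0, 0)) (𝓝 L) := by
  have hbound : Tendsto (fun d : ℝ × ℝ ↦ C * (d.1 + d.2)) (𝓝[Ioi 0 ×ˢ Ioi 0] (0, 0)) (𝓝 0) := by
    have hcont : Continuous fun d : ℝ × ℝ ↦ C * (d.1 + d.2) := by fun_prop
    simpa using (hcont.tendsto (0, 0)).mono_left nhdsWithin_le_nhds
  have hsmall : ∀ᶠ d : ℝ × ℝ in 𝓝[Ioi 0 ×ˢ Ioi 0] (0, 0), d ∈ Iic 1 ×ˢ Iic 1 :=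
    nhdsWithin_le_nhds (prod_mem_nhds (Iic_mem_nhds one_pos) (Iic_mem_nhds one_pos))
  rw [tendsto_iff_norm_sub_tendsto_zero]
  refine squeeze_zero' (Eventually.of_forall fun _ ↦ norm_nonneg _) ?_ hbound
  filter_upwards [self_mem_nhdsWithin, hsmall] with d hd hd_le
  exact h d.1 d.2 hd.1 hd_le.1 hd.2

lemma sum_abs_lattice_row_le {F : ℝ → ℝ → ℝ} (hF : ∀ x y, 0 ≤ F x y) {lam Δ1 Δ2 : ℝ}
    (hlam : 0 ≤ lam) (hΔ1 : 0 ≤ Δ1) (hΔ2 : 0 ≤ Δ2)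
    (hs : Summable fun ij : ℤ × ℤ ↦ F (ij.1 * Δ1) (ij.2 * Δ2) * Δ1 * Δ2)
    (M1 M2 : ℕ) (p : Fin M1 × Fin M2) :
    ∑ q : Fin M1 × Fin M2,
        |lam * F ((((q.1 : ℕ) : ℝ) - ((p.1 : ℕ) : ℝ)) * Δ1)
          ((((q.2 : ℕ) : ℝ) - ((p.2 : ℕ) : ℝ)) * Δ2) * Δ1 * Δ2| ≤
      lam * ∑' ij : ℤ × ℤ, F (ij.1 * Δ1) (ij.2 * Δ2) * Δ1 * Δ2 := by
  have hu (ij : ℤ × ℤ) : 0 ≤ F (ij.1 * Δ1) (ij.2 * Δ2) * Δ1 * Δ2 :=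
    mul_nonneg (mul_nonneg (hF _ _) hΔ1) hΔ2
  refine le_of_eq_of_le ?_ (mul_le_mul_of_nonneg_left (sum_fin_prod_sub_le_tsum hu hs p) hlam)
  rw [Finset.mul_sum]
  refine Finset.sum_congr rfl fun q _ ↦ ?_
  rw [abs_of_nonneg (mul_nonneg (mul_nonneg (mul_nonneg hlam (hF _ _)) hΔ1) hΔ2)]
  push_cast
  ring

/-- Grid-independent bound on the maximum (row-sum) norm of the jump matrix `A^{(J)}` with
entries `λ f̄((i−k)Δx1, (j−l)Δx2) Δx1 Δx2`, for a bivariate Gaussian density `f̄`: each row sum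
is at most `λ Σ_{i,j∈ℤ} f̄(iΔx1, jΔx2)Δx1Δx2`; this lattice sum is finite, the resulting bound
tends to `λ` as `Δx1, Δx2 → 0⁺`, and `‖A^{(J)}‖_∞ ≤ λ(1 + C(Δx1 + Δx2))` with a constant `C`
depending only on `f̄`. -/
theorem jump_matrix_maxnorm_bound (γ1 γ2 δ1 δ2 ρ lam : ℝ)
    (hδ1 : 0 < δ1) (hδ2 : 0 < δ2) (hρ : |ρ| < 1) (hlam : 0 ≤ lam) :
    let fbar : ℝ → ℝ → ℝ := fun x y =>
      (2 * π * δ1 * δ2 * Real.sqrt (1 - ρ ^ 2))⁻¹ *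
        Real.exp (-((((x - γ1) / δ1) ^ 2 + ((y - γ2) / δ2) ^ 2 -
          2 * ρ * ((x - γ1) / δ1) * ((y - γ2) / δ2)) / (2 * (1 - ρ ^ 2))))
    Tendsto
      (fun d : ℝ × ℝ =>
        lam * ∑' ij : ℤ × ℤ, fbar ((ij.1 : ℝ) * d.1) ((ij.2 : ℝ) * d.2) * d.1 * d.2)
      (nhdsWithin (0, 0) (Set.Ioi (0 : ℝ) ×ˢ Set.Ioi (0 : ℝ))) (nhds lam) ∧
    ∃ C : ℝ, ∀ Δ1 Δ2 : ℝ, 0 < Δ1 → Δ1 ≤ 1 → 0 < Δ2 → Δ2 ≤ 1 →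
      Summable (fun ij : ℤ × ℤ => fbar ((ij.1 : ℝ) * Δ1) ((ij.2 : ℝ) * Δ2) * Δ1 * Δ2) ∧
      (∀ (M1 M2 : ℕ) (p : Fin M1 × Fin M2),
        ∑ q : Fin M1 × Fin M2,
            |lam * fbar ((((q.1 : ℕ) : ℝ) - ((p.1 : ℕ) : ℝ)) * Δ1)
                ((((q.2 : ℕ) : ℝ) - ((p.2 : ℕ) : ℝ)) * Δ2) * Δ1 * Δ2| ≤
          lam * ∑' ij : ℤ × ℤ, fbar ((ij.1 : ℝ) * Δ1) ((ij.2 : ℝ) * Δ2) * Δ1 * Δ2) ∧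
      (∀ (M1 M2 : ℕ) (p : Fin M1 × Fin M2),
        ∑ q : Fin M1 × Fin M2,
            |lam * fbar ((((q.1 : ℕ) : ℝ) - ((p.1 : ℕ) : ℝ)) * Δ1)
                ((((q.2 : ℕ) : ℝ) - ((p.2 : ℕ) : ℝ)) * Δ2) * Δ1 * Δ2| ≤
          lam * (1 + C * (Δ1 + Δ2))) := by
  intro fbar
  obtain ⟨C, hC⟩ := bivariateNormalPDF_lattice_sum_sub_one_le (γ1 := γ1) (γ2 := γ2) hδ1 hδ2 hρ
  have hF : ∀ x y, 0 ≤ fbar x y := bivariateNormalPDF_nonneg hδ1 hδ2 hρ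
  refine ⟨?_, C, fun Δ1 Δ2 hΔ1 hΔ1_le hΔ2 _ ↦ ?_⟩
  · have hlim : Tendsto
        (fun d : ℝ × ℝ ↦ ∑' ij : ℤ × ℤ, fbar (ij.1 * d.1) (ij.2 * d.2) * d.1 * d.2)
        (𝓝[Ioi 0 ×ˢ Ioi 0] (0, 0)) (𝓝 1) :=
      tendsto_nhdsWithin_Ioi_prod_of_abs_sub_le fun d1 d2 h1 h1_le h2 ↦ (hC d1 d2 h1 h1_le h2).2
    simpa using hlim.const_mul lam
  · obtain ⟨hsum, hbound⟩ := hC Δ1 Δ2 hΔ1 hΔ1_le hΔ2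
    have hrow := sum_abs_lattice_row_le hF hlam hΔ1.le hΔ2.le hsum
    refine ⟨hsum, hrow, fun M1 M2 p ↦ (hrow M1 M2 p).trans ?_⟩
    gcongr
    exact sub_le_iff_le_add'.mp (abs_le.mp hbound).2
end
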